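/- Let S be a dense subset of [0,∞) with 0 ∈ S, and let X be a strongly 0-dimensional metrizable space. Then the closure in (Met(X), D_X) of the set of all T(S)-universal metrics in Met(X) is meager in (Met(X), D_X). In particular, the set of T(S)-universal metrics itself is meager. -/

import Mathlib

open Set
open scoped ENNReal

/-- The space `Met(X)` of metrics generating the topology of `X`. -/
def MetricCompat (X : Type*) [t : TopologicalSpace X] : Type _ :=
  { m : MetricSpace X // m.toUniformSpace.toTopologicalSpace = t }

namespace MetricCompat

variable {X : Type*} [TopologicalSpace X]

/-- The distance function of an element of `Met(X)`. -/
noncomputable def dist (d : MetricCompat X) (x y : X) : ℝ := d.1.dist x y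

/-- The supremum distance `D_X`, valued in `[0,∞]`. -/
noncomputable def supDist (d e : MetricCompat X) : ℝ≥0∞ :=
  ⨆ p : X × X, ENNReal.ofReal |d.dist p.1 p.2 - e.dist p.1 p.2|

/-- The topology on `Met(X)` induced by the open balls of `D_X`. -/
noncomputable instance : TopologicalSpace (MetricCompat X) :=
  TopologicalSpace.generateFrom
    { U | ∃ (d : MetricCompat X) (r : ℝ≥0∞), 0 < r ∧ U = { e | supDist d e < r } }

end MetricCompat

/-- A space is strongly `0`-dimensional if disjoint closed sets are separated by a clopen set. -/
def StronglyZeroDim (X : Type*) [TopologicalSpace X] : Prop :=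
  ∀ A B : Set X, IsClosed A → IsClosed B → Disjoint A B →
    ∃ V : Set X, IsClopen V ∧ A ⊆ V ∧ Disjoint V B

/-- A metric `d` is `T(S)`-universal if every value in `S` is realized as a distance. -/
def TSUniversal {X : Type*} [TopologicalSpace X] (S : Set ℝ) (d : MetricCompat X) : Prop :=
  ∀ s ∈ S, ∃ x y : X, d.dist x y = s

/-!
Near any compatible metric `d` and for any small `δ > 0` there is a compatible metric `e` with
`D_X(d, e) ≤ 2δ` taking no value in `(δ, 2δ)`: strong zero-dimensionality (with paracompactness)
partitions `X` into open pieces of `d`-diameter `< δ`, and `e` is `d` within a piece and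
`max d (2δ)` across pieces. A metric within `δ/4` of `e` takes no value in `(δ + δ/4, 2δ - δ/4)`,
an interval that meets the dense set `S`, so this ball around `e` contains no `T(S)`-universal
metric. Hence the closure of the universal metrics has empty interior, i.e. it is nowhere dense.
-/

namespace StronglyZeroDim

variable {X : Type*} [TopologicalSpace X]

lemma exists_isClopen_between (hX : StronglyZeroDim X) {A U : Set X} (hA : IsClosed A)
    (hU : IsOpen U) (hAU : A ⊆ U) : ∃ V, IsClopen V ∧ A ⊆ V ∧ V ⊆ U := by
  obtain ⟨V, hV, hAV, hVU⟩ :=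
    hX A Uᶜ hA hU.isClosed_compl (disjoint_compl_right_iff_subset.2 hAU)
  exact ⟨V, hV, hAV, disjoint_compl_right_iff_subset.1 hVU⟩

lemma exists_locallyFinite_isClopen_refinement [ParacompactSpace X] [NormalSpace X]
    (hX : StronglyZeroDim X) {ι : Type*} {u : ι → Set X} (hu : ∀ i, IsOpen (u i))
    (hcov : ⋃ i, u i = univ) :
    ∃ V : ι → Set X, (∀ i, IsClopen (V i)) ∧ ⋃ i, V i = univ ∧ LocallyFinite V ∧
      ∀ i, V i ⊆ u i := by
  obtain ⟨v, hvo, hvcov, hvlf, hvu⟩ := precise_refinement u hu hcov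
  obtain ⟨w, hwcov, hw, hwv⟩ := exists_subset_iUnion_closed_subset isClosed_univ hvo
    (fun x _ => hvlf.point_finite x) hvcov.ge
  choose V hV hwV hVv using fun i => hX.exists_isClopen_between (hw i) (hvo i) (hwv i)
  exact ⟨V, hV, univ_subset_iff.1 (hwcov.trans (iUnion_mono hwV)), hvlf.subset hVv,
    fun i => (hVv i).trans (hvu i)⟩

end StronglyZeroDim

lemma LocallyFinite.exists_isOpen_fiber_of_isClopen {X ι : Type*} [TopologicalSpace X]
    {V : ι → Set X} (hV : LocallyFinite V) (hVc : ∀ i, IsClopen (V i))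
    (hcov : ⋃ i, V i = univ) : ∃ p : X → ι, (∀ x, x ∈ V (p x)) ∧ ∀ i, IsOpen (p ⁻¹' {i}) := by
  -- `p x` is the least index, for a well-ordering of `ι`, of a member containing `x`.
  let r : ι → ι → Prop := WellOrderingRel
  have hr : WellFounded r := WellOrderingRel.isWellOrder.wf
  have hne : ∀ x, {i | x ∈ V i}.Nonempty := fun x => mem_iUnion.1 (hcov ▸ mem_univ x)
  let p : X → ι := fun x => hr.min {i | x ∈ V i} (hne x)
  have hp : ∀ x, x ∈ V (p x) := fun x => hr.min_mem _ (hne x)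
  have hfiber : ∀ i, p ⁻¹' {i} = V i \ ⋃ j : {j // r j i}, V j := by
    intro i
    ext x
    simp only [mem_preimage, mem_singleton_iff, mem_sdiff, mem_iUnion, not_exists]
    constructor
    · rintro rfl
      exact ⟨hp x, fun j hj => hr.not_lt_min {i | x ∈ V i} hj j.2⟩
    · rintro ⟨hxi, hxj⟩
      rcases trichotomous_of r (p x) i with h | h | h
      · exact absurd (hp x) (hxj ⟨p x, h⟩)
      · exact h
      · exact absurd h (hr.not_lt_min {i | x ∈ V i} hxi)
  refine ⟨p, hp, fun i => ?_⟩
  rw [hfiber]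
  exact (hVc i).isOpen.sdiff <| (hV.comp_injective Subtype.val_injective).isClosed_iUnion
    fun j => (hVc j).isClosed

namespace StronglyZeroDim

variable {X : Type*}

lemma exists_isOpen_fiber_subordinate [TopologicalSpace X] [ParacompactSpace X] [NormalSpace X]
    (hX : StronglyZeroDim X) {ι : Type*} {u : ι → Set X} (hu : ∀ i, IsOpen (u i))
    (hcov : ⋃ i, u i = univ) : ∃ p : X → ι, (∀ x, x ∈ u (p x)) ∧ ∀ i, IsOpen (p ⁻¹' {i}) := by
  obtain ⟨V, hVc, hVcov, hVlf, hVu⟩ := hX.exists_locallyFinite_isClopen_refinement hu hcov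
  obtain ⟨p, hp, hpo⟩ := hVlf.exists_isOpen_fiber_of_isClopen hVc hVcov
  exact ⟨p, fun x => hVu _ (hp x), hpo⟩

lemma exists_isOpen_fiber_dist_lt [MetricSpace X] (hX : StronglyZeroDim X) {δ : ℝ}
    (hδ : 0 < δ) :
    ∃ p : X → X, (∀ x y, p x = p y → dist x y < δ) ∧ ∀ i, IsOpen (p ⁻¹' {i}) := by
  obtain ⟨p, hp, hpo⟩ := hX.exists_isOpen_fiber_subordinate (u := fun c => Metric.ball c (δ / 2))
    (fun _ => Metric.isOpen_ball)
    (iUnion_eq_univ_iff.2 fun x => ⟨x, Metric.mem_ball_self (half_pos hδ)⟩)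
  refine ⟨p, fun x y hxy => ?_, hpo⟩
  have hx : dist x (p x) < δ / 2 := hp x
  have hy : dist y (p x) < δ / 2 := hxy ▸ hp y
  linarith [dist_triangle_right x y (p x)]

end StronglyZeroDim

section FiberGap

variable {X ι : Type*} [MetricSpace X] [DecidableEq ι] (p : X → ι) (c : ℝ)

noncomputable def fiberGapDist (x y : X) : ℝ :=
  max (dist x y) (if p x = p y then 0 else c)

lemma dist_le_fiberGapDist (x y : X) : dist x y ≤ fiberGapDist p c x y :=
  le_max_left _ _

variable {p c} in
lemma fiberGapDist_of_eq {x y : X} (h : p x = p y) : fiberGapDist p c x y = dist x y := by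
  simp [fiberGapDist, h]

variable {p c} in
lemma fiberGapDist_of_ne {x y : X} (h : p x ≠ p y) :
    fiberGapDist p c x y = max (dist x y) c := by
  simp [fiberGapDist, h]

lemma fiberGapDist_comm (x y : X) : fiberGapDist p c x y = fiberGapDist p c y x := by
  by_cases h : p x = p y
  · rw [fiberGapDist_of_eq h, fiberGapDist_of_eq h.symm, dist_comm]
  · rw [fiberGapDist_of_ne h, fiberGapDist_of_ne (Ne.symm h), dist_comm]

lemma fiberGapDist_triangle (x y z : X) :
    fiberGapDist p c x z ≤ fiberGapDist p c x y + fiberGapDist p c y z := by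
  unfold fiberGapDist
  refine max_le ((dist_triangle x y z).trans (add_le_add (le_max_left _ _) (le_max_left _ _))) ?_
  have hxy := le_max_right (dist x y) (if p x = p y then 0 else c)
  have hyz := le_max_right (dist y z) (if p y = p z then 0 else c)
  have hxy' := (dist_nonneg (x := x) (y := y)).trans (le_max_left _ (if p x = p y then 0 else c))
  have hyz' := (dist_nonneg (x := y) (y := z)).trans (le_max_left _ (if p y = p z then 0 else c))
  split_ifs at * <;> first | linarith | simp_all

lemma eq_of_fiberGapDist_eq_zero (x y : X) (h : fiberGapDist p c x y = 0) : x = y :=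
  dist_le_zero.1 (h ▸ dist_le_fiberGapDist p c x y)

variable {p} in
lemma isOpen_iff_fiberGapDist (hp : ∀ i, IsOpen (p ⁻¹' {i})) (s : Set X) :
    IsOpen s ↔ ∀ x ∈ s, ∃ ε > 0, ∀ y, fiberGapDist p c x y < ε → y ∈ s := by
  refine ⟨fun hs x hx => ?_, fun hs => isOpen_iff_forall_mem_open.2 fun x hx => ?_⟩
  · obtain ⟨ε, hε, hball⟩ := Metric.isOpen_iff.1 hs x hx
    refine ⟨ε, hε, fun y hy => hball ?_⟩
    rw [Metric.mem_ball, dist_comm]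
    exact (dist_le_fiberGapDist p c x y).trans_lt hy
  · obtain ⟨ε, hε, hball⟩ := hs x hx
    refine ⟨p ⁻¹' {p x} ∩ Metric.ball x ε, fun y ⟨hpy, hy⟩ => hball y ?_,
      (hp _).inter Metric.isOpen_ball, rfl, Metric.mem_ball_self hε⟩
    rwa [fiberGapDist_of_eq hpy.symm, dist_comm]

variable {c} in
lemma abs_fiberGapDist_sub_dist_le (hc : 0 ≤ c) (x y : X) :
    |fiberGapDist p c x y - dist x y| ≤ c := by
  by_cases h : p x = p y
  · rwa [fiberGapDist_of_eq h, sub_self, abs_zero]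
  · rw [fiberGapDist_of_ne h, abs_of_nonneg (sub_nonneg.2 (le_max_left _ _))]
    linarith [max_le_add_of_nonneg (dist_nonneg (x := x) (y := y)) hc]

end FiberGap

lemma StronglyZeroDim.exists_metric_dist_notMem_Ioo {X : Type*} [m₀ : MetricSpace X]
    (hX : StronglyZeroDim X) {δ : ℝ} (hδ : 0 < δ) :
    ∃ m : MetricSpace X,
      m.toUniformSpace.toTopologicalSpace = m₀.toUniformSpace.toTopologicalSpace ∧
      (∀ x y, |m.dist x y - m₀.dist x y| ≤ 2 * δ) ∧ ∀ x y, m.dist x y ∉ Ioo δ (2 * δ) := by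
  classical
  obtain ⟨p, hpδ, hp⟩ := hX.exists_isOpen_fiber_dist_lt hδ
  let c := 2 * δ
  refine ⟨MetricSpace.ofDistTopology (fiberGapDist p c)
    (fun x => (fiberGapDist_of_eq rfl).trans (dist_self x)) (fiberGapDist_comm p c)
    (fiberGapDist_triangle p c) (isOpen_iff_fiberGapDist c hp) (eq_of_fiberGapDist_eq_zero p c),
    rfl, abs_fiberGapDist_sub_dist_le (c := c) p (by positivity), fun x y hxy => ?_⟩
  change fiberGapDist p c x y ∈ Ioo δ c at hxy
  by_cases h : p x = p y
  · rw [fiberGapDist_of_eq h] at hxy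
    exact (hpδ x y h).not_gt hxy.1
  · rw [fiberGapDist_of_ne h] at hxy
    exact (le_max_right _ _).not_gt hxy.2

namespace MetricCompat

variable {X : Type*} [TopologicalSpace X]

def ball (d : MetricCompat X) (r : ℝ≥0∞) : Set (MetricCompat X) :=
  {e | supDist d e < r}

lemma supDist_le_iff {d e : MetricCompat X} {r : ℝ≥0∞} :
    supDist d e ≤ r ↔ ∀ x y, ENNReal.ofReal |d.dist x y - e.dist x y| ≤ r := by
  simp only [supDist, iSup_le_iff, Prod.forall]

lemma ofReal_abs_dist_sub_le_supDist (d e : MetricCompat X) (x y : X) :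
    ENNReal.ofReal |d.dist x y - e.dist x y| ≤ supDist d e :=
  supDist_le_iff.1 le_rfl x y

lemma supDist_self (d : MetricCompat X) : supDist d d = 0 :=
  nonpos_iff_eq_zero.1 <| supDist_le_iff.2 fun x y => by simp

lemma supDist_triangle (d e f : MetricCompat X) :
    supDist d f ≤ supDist d e + supDist e f := supDist_le_iff.2 fun x y =>
  calc ENNReal.ofReal |d.dist x y - f.dist x y|
      ≤ ENNReal.ofReal (|d.dist x y - e.dist x y| + |e.dist x y - f.dist x y|) :=
        ENNReal.ofReal_le_ofReal (abs_sub_le _ _ _)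
    _ = ENNReal.ofReal |d.dist x y - e.dist x y| + ENNReal.ofReal |e.dist x y - f.dist x y| :=
        ENNReal.ofReal_add (abs_nonneg _) (abs_nonneg _)
    _ ≤ supDist d e + supDist e f :=
        add_le_add (ofReal_abs_dist_sub_le_supDist _ _ _ _) (ofReal_abs_dist_sub_le_supDist _ _ _ _)

lemma mem_ball_self (d : MetricCompat X) {r : ℝ≥0∞} (hr : 0 < r) : d ∈ ball d r := by
  show supDist d d < r
  rwa [supDist_self]

lemma ball_subset_ball (d : MetricCompat X) {r s : ℝ≥0∞} (h : r ≤ s) : ball d r ⊆ ball d s :=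
  fun _ he => lt_of_lt_of_le he h

lemma ball_subset_ball_of_mem {d e : MetricCompat X} {r : ℝ≥0∞} (he : e ∈ ball d r) :
    ball e (r - supDist d e) ⊆ ball d r := fun f hf =>
  calc supDist d f ≤ supDist d e + supDist e f := supDist_triangle d e f
    _ < supDist d e + (r - supDist d e) := ENNReal.add_lt_add_left (ne_top_of_lt he) hf
    _ = r := add_tsub_cancel_of_le (le_of_lt he)

lemma isTopologicalBasis_ball :
    TopologicalSpace.IsTopologicalBasis
      {U : Set (MetricCompat X) | ∃ d r, 0 < r ∧ U = ball d r} := by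
  refine ⟨?_, sUnion_eq_univ_iff.2 fun d =>
    ⟨ball d 1, ⟨d, 1, one_pos, rfl⟩, mem_ball_self d one_pos⟩, rfl⟩
  rintro _ ⟨d₁, r₁, -, rfl⟩ _ ⟨d₂, r₂, -, rfl⟩ e ⟨he₁, he₂⟩
  have hr : 0 < min (r₁ - supDist d₁ e) (r₂ - supDist d₂ e) :=
    lt_min (tsub_pos_of_lt he₁) (tsub_pos_of_lt he₂)
  exact ⟨_, ⟨e, _, hr, rfl⟩, mem_ball_self e hr, subset_inter
    ((ball_subset_ball e (min_le_left _ _)).trans (ball_subset_ball_of_mem he₁))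
    ((ball_subset_ball e (min_le_right _ _)).trans (ball_subset_ball_of_mem he₂))⟩

lemma isOpen_ball (d : MetricCompat X) {r : ℝ≥0∞} (hr : 0 < r) : IsOpen (ball d r) :=
  isTopologicalBasis_ball.isOpen ⟨d, r, hr, rfl⟩

lemma exists_ball_subset_of_isOpen {U : Set (MetricCompat X)} (hU : IsOpen U)
    {d : MetricCompat X} (hd : d ∈ U) : ∃ r > 0, ball d r ⊆ U := by
  obtain ⟨_, ⟨c, r, -, rfl⟩, hd, hcU⟩ := isTopologicalBasis_ball.isOpen_iff.1 hU d hd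
  exact ⟨r - supDist c d, tsub_pos_of_lt hd, (ball_subset_ball_of_mem hd).trans hcU⟩

lemma exists_supDist_le_dist_notMem_Ioo (hX : StronglyZeroDim X) (d : MetricCompat X) {δ : ℝ}
    (hδ : 0 < δ) : ∃ e : MetricCompat X,
      supDist d e ≤ ENNReal.ofReal (2 * δ) ∧ ∀ x y, e.dist x y ∉ Ioo δ (2 * δ) := by
  have hX₀ : @StronglyZeroDim X d.1.toUniformSpace.toTopologicalSpace := by
    rw [d.2]
    exact hX
  obtain ⟨m, hm, hclose, hgap⟩ := @StronglyZeroDim.exists_metric_dist_notMem_Ioo X d.1 hX₀ δ hδ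
  refine ⟨⟨m, hm.trans d.2⟩, supDist_le_iff.2 fun x y => ENNReal.ofReal_le_ofReal ?_, hgap⟩
  rw [abs_sub_comm]
  exact hclose x y

lemma disjoint_ball_setOf_tsUniversal {S : Set ℝ} {e : MetricCompat X} {a b η : ℝ}
    (hgap : ∀ x y, e.dist x y ∉ Ioo a b) (hS : (Ioo (a + η) (b - η) ∩ S).Nonempty) :
    Disjoint (ball e (ENNReal.ofReal η)) {f | TSUniversal S f} := by
  refine Set.disjoint_left.2 fun f hef hf => ?_
  obtain ⟨s, ⟨has, hsb⟩, hsS⟩ := hS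
  obtain ⟨x, y, hxy⟩ := hf s hsS
  have hη : |e.dist x y - f.dist x y| < η :=
    (ENNReal.ofReal_lt_ofReal_iff'.1
      ((ofReal_abs_dist_sub_le_supDist e f x y).trans_lt hef)).1
  rw [hxy, abs_sub_lt_iff] at hη
  exact hgap x y ⟨by linarith, by linarith⟩

lemma isNowhereDense_setOf_tsUniversal {S : Set ℝ} (hS : Ici 0 ⊆ closure S)
    (hX : StronglyZeroDim X) : IsNowhereDense {e : MetricCompat X | TSUniversal S e} := by
  refine eq_empty_iff_forall_notMem.2 fun d hd => ?_
  obtain ⟨r, hr, hdr⟩ := exists_ball_subset_of_isOpen isOpen_interior hd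
  obtain ⟨ε, -, hε, hεr⟩ := ENNReal.lt_iff_exists_real_btwn.1 hr
  have hδ : 0 < ε / 2 := half_pos (ENNReal.ofReal_pos.1 hε)
  obtain ⟨e, hde, hgap⟩ := exists_supDist_le_dist_notMem_Ioo hX d hδ
  have he : e ∈ closure {e : MetricCompat X | TSUniversal S e} :=
    interior_subset (hdr (lt_of_le_of_lt hde (by rwa [mul_div_cancel₀ _ two_ne_zero])))
  have hSgap : (Ioo (ε / 2 + ε / 8) (2 * (ε / 2) - ε / 8) ∩ S).Nonempty :=
    mem_closure_iff.1 (hS (show 0 ≤ 3 * ε / 4 by linarith)) _ isOpen_Ioo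
      ⟨by linarith, by linarith⟩
  have hη : (0 : ℝ≥0∞) < ENNReal.ofReal (ε / 8) := ENNReal.ofReal_pos.2 (by linarith)
  exact Set.disjoint_left.1 ((disjoint_ball_setOf_tsUniversal hgap hSgap).closure_right
    (isOpen_ball e hη)) (mem_ball_self e hη) he

end MetricCompat

theorem TS_universal_metrics_meager_general
    (S : Set ℝ) (hSdense : Set.Ici (0 : ℝ) ⊆ closure S)
    {X : Type*} [TopologicalSpace X]
    (hX : StronglyZeroDim X) :
    IsMeagre (closure { e : MetricCompat X | TSUniversal S e }) ∧
    IsMeagre { e : MetricCompat X | TSUniversal S e } :=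
  have h := MetricCompat.isNowhereDense_setOf_tsUniversal hSdense hX
  ⟨h.closure.isMeagre, h.isMeagre⟩

/-- Theorem 3.11: for a dense subset `S` of `[0,∞)` with `0 ∈ S` and a strongly
`0`-dimensional metrizable space `X`, the closure of the set of `T(S)`-universal metrics is
meager in `(Met(X), D_X)`; in particular, the set of `T(S)`-universal metrics is meager. -/
theorem TS_universal_metrics_meager
    (S : Set ℝ) (hSsub : S ⊆ Set.Ici 0) (hSdense : Set.Ici (0 : ℝ) ⊆ closure S)
    (hS0 : (0 : ℝ) ∈ S)
    {X : Type*} [TopologicalSpace X] [TopologicalSpace.MetrizableSpace X]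
    (hX : StronglyZeroDim X) :
    IsMeagre (closure { e : MetricCompat X | TSUniversal S e }) ∧
    IsMeagre { e : MetricCompat X | TSUniversal S e } :=
  TS_universal_metrics_meager_general S hSdense hX
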